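/- For pairwise distinct reals λ, μ, ν and every a > 0, the second divided difference of the exponential function e_a(x) := e^{iax} satisfies the simplex identity (∂²e_a)(λ,μ,ν) = e^{iaλ}/((λ−μ)(λ−ν)) + e^{iaμ}/((μ−λ)(μ−ν)) + e^{iaν}/((ν−λ)(ν−μ)) = −∬_{t,u ≥ 0, t+u ≤ a} e^{i(a−t−u)λ} e^{itμ} e^{iuν} dt du, where the integral is over the triangle {(t,u) : t ≥ 0, u ≥ 0, t + u ≤ a}. -/
import Mathlib

open MeasureTheory Set

private lemma stmt11_alg (x y z X Y Z : ℂ) (hxy : x ≠ y) (hxz : x ≠ z) (hyz : y ≠ z) :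
    X/((x-y)*(x-z)) + Y/((y-x)*(y-z)) + Z/((z-x)*(z-y)) =
    -(((Y - Z)/(Complex.I*(y-z)) - (Y - X)/(Complex.I*(y-x))) / (Complex.I*(z-x))) := by
  have hII : ∀ c e : ℂ, (Complex.I*c) * (Complex.I*e) = -(c*e) := by
    intro c e; rw [mul_mul_mul_comm, Complex.I_mul_I]; ring
  rw [sub_div, div_div, div_div, hII, hII]
  simp only [div_neg]
  have h1 : x - y ≠ 0 := sub_ne_zero.2 hxy
  have h2 : x - z ≠ 0 := sub_ne_zero.2 hxz
  have h3 : y - z ≠ 0 := sub_ne_zero.2 hyz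
  have h4 : y - x ≠ 0 := sub_ne_zero.2 hxy.symm
  have h5 : z - x ≠ 0 := sub_ne_zero.2 hxz.symm
  have h6 : z - y ≠ 0 := sub_ne_zero.2 hyz.symm
  field_simp
  ring

/-- Simplex representation of the second divided difference of x ↦ e^{iax}:
for a > 0 and pairwise distinct reals λ, μ, ν,
`e^{iaλ}/((λ−μ)(λ−ν)) + e^{iaμ}/((μ−λ)(μ−ν)) + e^{iaν}/((ν−λ)(ν−μ))
  = −∬_{t,u ≥ 0, t+u ≤ a} e^{i(a−t−u)λ} e^{itμ} e^{iuν} dt du`. -/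
theorem stmt11 (a l m n : ℝ) (ha : 0 < a)
    (hlm : l ≠ m) (hln : l ≠ n) (hmn : m ≠ n) :
    Complex.exp (Complex.I * a * l) / (((l : ℂ) - m) * ((l : ℂ) - n)) +
      Complex.exp (Complex.I * a * m) / (((m : ℂ) - l) * ((m : ℂ) - n)) +
      Complex.exp (Complex.I * a * n) / (((n : ℂ) - l) * ((n : ℂ) - m)) =
    -∫ p in {p : ℝ × ℝ | 0 ≤ p.1 ∧ 0 ≤ p.2 ∧ p.1 + p.2 ≤ a},
        Complex.exp (Complex.I * ((a : ℂ) - p.1 - p.2) * l) *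
          Complex.exp (Complex.I * p.1 * m) * Complex.exp (Complex.I * p.2 * n) := by
  have hml : (m : ℂ) - l ≠ 0 := sub_ne_zero.2 (by exact_mod_cast hlm.symm)
  have hmnC : (m : ℂ) - n ≠ 0 := sub_ne_zero.2 (by exact_mod_cast hmn)
  have hnl : (n : ℂ) - l ≠ 0 := sub_ne_zero.2 (by exact_mod_cast hln.symm)
  set F : ℝ × ℝ → ℂ := fun p =>
    Complex.exp (Complex.I * ((a : ℂ) - p.1 - p.2) * l) *
      Complex.exp (Complex.I * p.1 * m) * Complex.exp (Complex.I * p.2 * n) with hF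
  set S : Set (ℝ × ℝ) := {p : ℝ × ℝ | 0 ≤ p.1 ∧ 0 ≤ p.2 ∧ p.1 + p.2 ≤ a} with hS
  have hSclosed : IsClosed S := by
    have h1 : IsClosed {p : ℝ × ℝ | 0 ≤ p.1} := isClosed_le continuous_const continuous_fst
    have h2 : IsClosed {p : ℝ × ℝ | 0 ≤ p.2} := isClosed_le continuous_const continuous_snd
    have h3 : IsClosed {p : ℝ × ℝ | p.1 + p.2 ≤ a} :=
      isClosed_le (continuous_fst.add continuous_snd) continuous_const
    exact h1.inter (h2.inter h3)
  have hSm : MeasurableSet S := hSclosed.measurableSet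
  have hScompact : IsCompact S := by
    apply (isCompact_Icc (a := ((0:ℝ),(0:ℝ))) (b := (a,a))).of_isClosed_subset hSclosed
    rintro ⟨t, u⟩ ⟨h1, h2, h3⟩
    exact ⟨⟨h1, h2⟩, ⟨by linarith, by linarith⟩⟩
  have hFcont : Continuous F := by fun_prop
  have hInt : IntegrableOn F S := hFcont.continuousOn.integrableOn_compact hScompact
  have key : ∫ p in S, F p = ∫ t in Icc (0:ℝ) a, ∫ u in Icc (0:ℝ) (a - t), F (t, u) := by
    rw [← integral_indicator hSm]
    rw [Measure.volume_eq_prod, integral_prod]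
    · rw [← integral_indicator (measurableSet_Icc (a := (0:ℝ)) (b := a))]
      congr 1
      funext t
      by_cases ht : t ∈ Icc (0:ℝ) a
      · rw [indicator_of_mem ht, ← integral_indicator (measurableSet_Icc (a := (0:ℝ)) (b := a - t))]
        congr 1
        funext u
        by_cases hu : u ∈ Icc (0:ℝ) (a - t)
        · rw [indicator_of_mem hu, indicator_of_mem]
          exact ⟨ht.1, hu.1, by simp at hu ⊢; linarith [hu.2]⟩
        · rw [indicator_of_notMem hu, indicator_of_notMem]
          rintro ⟨p1, p2, p3⟩
          exact hu ⟨p2, by linarith⟩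
      · rw [indicator_of_notMem ht]
        have : ∀ u : ℝ, S.indicator F (t, u) = 0 := by
          intro u
          apply indicator_of_notMem
          rintro ⟨p1, p2, p3⟩
          exact ht ⟨p1, by linarith⟩
        simp [this]
    · rw [← Measure.volume_eq_prod]
      exact (integrable_indicator_iff hSm).2 hInt
  -- inner integral computation
  have inner : ∀ t ∈ Icc (0:ℝ) a, ∫ u in Icc (0:ℝ) (a - t), F (t, u) =
      (Complex.exp (Complex.I * (a:ℂ) * n) * Complex.exp ((Complex.I * ((m:ℂ) - n)) * t)
        - Complex.exp (Complex.I * (a:ℂ) * l) * Complex.exp ((Complex.I * ((m:ℂ) - l)) * t))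
        / (Complex.I * ((n:ℂ) - l)) := by
    intro t ht
    have hta : (0:ℝ) ≤ a - t := by linarith [ht.2]
    have hc : Complex.I * ((n:ℂ) - l) ≠ 0 := mul_ne_zero Complex.I_ne_zero hnl
    rw [integral_Icc_eq_integral_Ioc, ← intervalIntegral.integral_of_le hta]
    have hfeq : ∀ u : ℝ, u ∈ uIcc (0:ℝ) (a - t) → F (t, u) =
        (Complex.exp (Complex.I * ((a:ℂ) - t) * l) * Complex.exp (Complex.I * (t:ℂ) * m)) *
          Complex.exp ((Complex.I * ((n:ℂ) - l)) * u) := by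
      intro u _
      simp only [hF, ← Complex.exp_add]
      congr 1
      push_cast
      ring
    rw [intervalIntegral.integral_congr hfeq, intervalIntegral.integral_const_mul,
      integral_exp_mul_complex hc]
    simp only [Complex.ofReal_zero, mul_zero, Complex.exp_zero]
    rw [mul_div_assoc']
    congr 1
    rw [mul_sub, mul_one]
    simp only [← Complex.exp_add]
    congr 2 <;> (push_cast; ring)
  have key2 : ∫ t in Icc (0:ℝ) a, ∫ u in Icc (0:ℝ) (a - t), F (t, u) =
      ((Complex.exp (Complex.I * (a:ℂ) * m) - Complex.exp (Complex.I * (a:ℂ) * n))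
          / (Complex.I * ((m:ℂ) - n))
        - (Complex.exp (Complex.I * (a:ℂ) * m) - Complex.exp (Complex.I * (a:ℂ) * l))
          / (Complex.I * ((m:ℂ) - l)))
        / (Complex.I * ((n:ℂ) - l)) := by
    rw [setIntegral_congr_fun measurableSet_Icc inner]
    rw [integral_Icc_eq_integral_Ioc, ← intervalIntegral.integral_of_le ha.le]
    rw [intervalIntegral.integral_div]
    congr 1
    have hc1 : Complex.I * ((m:ℂ) - n) ≠ 0 := mul_ne_zero Complex.I_ne_zero hmnC
    have hc2 : Complex.I * ((m:ℂ) - l) ≠ 0 := mul_ne_zero Complex.I_ne_zero hml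
    rw [intervalIntegral.integral_sub
        (Continuous.intervalIntegrable (by fun_prop) _ _)
        (Continuous.intervalIntegrable (by fun_prop) _ _),
      intervalIntegral.integral_const_mul, intervalIntegral.integral_const_mul,
      integral_exp_mul_complex hc1, integral_exp_mul_complex hc2]
    simp only [Complex.ofReal_zero, mul_zero, Complex.exp_zero]
    rw [mul_div_assoc', mul_div_assoc']
    congr 2
    · rw [mul_sub, mul_one]
      congr 1
      rw [← Complex.exp_add]
      congr 1
      push_cast; ring
    · rw [mul_sub, mul_one]
      congr 1
      rw [← Complex.exp_add]
      congr 1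
      push_cast; ring
  rw [key, key2]
  have := stmt11_alg (l:ℂ) (m:ℂ) (n:ℂ)
    (Complex.exp (Complex.I * (a:ℂ) * l)) (Complex.exp (Complex.I * (a:ℂ) * m))
    (Complex.exp (Complex.I * (a:ℂ) * n))
    (by exact_mod_cast hlm) (by exact_mod_cast hln) (by exact_mod_cast hmn)
  exact this
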